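/- Assume u^{k−1} : 𝒯 → [0,∞)ⁿ satisfies Σᵢ u^{k−1}_{i,K} < 1 for every K, and let u^k : 𝒯 → 𝒪 solve one step of the implicit Euler finite-volume scheme with previous values u^{k−1}. Then the discrete entropy dissipation inequality H(u^k) + Δt · Σᵢ₌₁ⁿ Iᵢ(u^k) ≤ H(u^{k−1}) holds. -/

import Mathlib

/-
Let `g = logQP`, so that `log vᵢ(u) = log uᵢ + g (Σⱼ uⱼ)` is the gradient of the entropy density
`h`. Since `q(M)/p(M)` is the mean over `[0, M]` of the nondecreasing function
`s ^ a / ((1 - s) ^ b p(s)²)`, `g` is nondecreasing, hence `h` is convex; the bound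
`g(s) ≥ a log s - C` makes `g` integrable at `0`. Convexity bounds `H(u^k) - H(u^{k-1})` by
`Σ_K m(K) Σᵢ (log vᵢ(u^k_K) - log vᵢ(u^D)) (u^k_{i,K} - u^{k-1}_{i,K})`. Inserting the scheme and
summing by parts over the edges turns this into `-Δt Σᵢ Σ_σ τ_σ p_σ² D_σ vᵢ D_σ log vᵢ`, and
`(√x - √y)² ≤ (x - y) (log x - log y)` on every edge bounds it by `-Δt Σᵢ Iᵢ(u^k)`.
-/

open Real Set MeasureTheory

/-- `q(M) = (p(M)/M) ∫₀^M s^a / ((1-s)^b p(s)²) ds`. -/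
noncomputable def qfun (p : ℝ → ℝ) (a b : ℝ) (M : ℝ) : ℝ :=
  p M / M * ∫ s in (0:ℝ)..M, s ^ a / ((1 - s) ^ b * p s ^ 2)

/-- `vᵢ(u) = uᵢ q(M)/p(M)` with `M = Σⱼ uⱼ`, extended by `0` when `M = 0`. -/
noncomputable def vfun (p : ℝ → ℝ) (a b : ℝ) {n : ℕ} (u : Fin n → ℝ) (i : Fin n) : ℝ :=
  if (∑ j, u j) = 0 then 0
  else u i * qfun p a b (∑ j, u j) / p (∑ j, u j)

/-- Edge structure of a finite-volume graph: `Sum.inl K` is a Dirichlet edge at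
cell `K`, `Sum.inr (K, L)` an interior edge joining `K` and `L`. -/
abbrev EdgeEnds (T E : Type) := E → T ⊕ T × T

/-- `D_σ w = w_{K,σ} − w_K` for an edge `σ` (with the orientation of `ends`),
with exterior Dirichlet value `wD`. -/
noncomputable def edgeDiff {T E : Type} (ends : EdgeEnds T E) (w : T → ℝ) (wD : ℝ) (σ : E) : ℝ :=
  match ends σ with
  | Sum.inl K => wD - w K
  | Sum.inr KL => w KL.2 - w KL.1

/-- `D_{K,σ} w = w_{K,σ} − w_K` viewed from cell `K`, equal to `0` if `σ` is not
incident to `K`. -/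
noncomputable def cellDiff {T E : Type} [DecidableEq T] (ends : EdgeEnds T E)
    (w : T → ℝ) (wD : ℝ) (σ : E) (K : T) : ℝ :=
  match ends σ with
  | Sum.inl K' => if K' = K then wD - w K else 0
  | Sum.inr KL =>
      if KL.1 = K then w KL.2 - w K else if KL.2 = K then w KL.1 - w K else 0

/-- `(p_σ)² = (p(M_K)² + p(M_{K,σ})²)/2` on an edge `σ`, the exterior value on
Dirichlet edges being `M^D`. -/
noncomputable def pEdgeSq (p : ℝ → ℝ) {T E : Type} (ends : EdgeEnds T E)
    (Mf : T → ℝ) (MD : ℝ) (σ : E) : ℝ :=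
  match ends σ with
  | Sum.inl K => (p (Mf K) ^ 2 + p MD ^ 2) / 2
  | Sum.inr KL => (p (Mf KL.1) ^ 2 + p (Mf KL.2) ^ 2) / 2

/-- One step of the implicit Euler finite-volume scheme with unit diffusivities:
`ucur : 𝒯 → [0,∞)ⁿ` with `Σᵢ ucurᵢ < 1` on each cell, satisfying
`m(K)(u^k_{i,K} − u^{k−1}_{i,K})/Δt = Σ_σ τ_σ (p_σ^k)² D_{K,σ}(vᵢ(u^k))`. -/
def SchemeStep (p : ℝ → ℝ) (a b : ℝ) (n : ℕ) {T E : Type}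
    [Fintype T] [Fintype E] [DecidableEq T] (ends : EdgeEnds T E)
    (m : T → ℝ) (τ : E → ℝ) (uD : Fin n → ℝ) (Δt : ℝ)
    (uprev ucur : T → Fin n → ℝ) : Prop :=
  (∀ K i, 0 ≤ ucur K i) ∧ (∀ K, ∑ i, ucur K i < 1) ∧
  ∀ K i, m K * (ucur K i - uprev K i) / Δt =
    ∑ σ : E, τ σ * pEdgeSq p ends (fun L => ∑ j, ucur L j) (∑ j, uD j) σ *
      cellDiff ends (fun L => vfun p a b (ucur L) i) (vfun p a b uD i) σ K

/-- Entropy density `h(u)` (extended by continuity when some `uᵢ = 0`). -/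
noncomputable def hent (p : ℝ → ℝ) (a b : ℝ) {n : ℕ} (u : Fin n → ℝ) : ℝ :=
  (∑ i, (u i * (Real.log (u i) - 1) + 1)) +
    ∫ s in (0:ℝ)..(∑ i, u i), Real.log (qfun p a b s / p s)

/-- Relative entropy density `h*(u|u^D)`. -/
noncomputable def hstar (p : ℝ → ℝ) (a b : ℝ) {n : ℕ} (uD u : Fin n → ℝ) : ℝ :=
  hent p a b u - hent p a b uD -
    ∑ i, Real.log (uD i * qfun p a b (∑ j, uD j) / p (∑ j, uD j)) * (u i - uD i)

/-- Discrete relative entropy `H(u) = Σ_K m(K) h*(u_K|u^D)`. -/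
noncomputable def Hent (p : ℝ → ℝ) (a b : ℝ) {n : ℕ} {T : Type} [Fintype T]
    (m : T → ℝ) (uD : Fin n → ℝ) (u : T → Fin n → ℝ) : ℝ :=
  ∑ K, m K * hstar p a b uD (u K)

/-- Discrete entropy production `Iᵢ(u) = Σ_σ τ_σ p_σ² (D_σ √(vᵢ(u)))²`. -/
noncomputable def Iprod (p : ℝ → ℝ) (a b : ℝ) {n : ℕ} {T E : Type}
    [Fintype T] [Fintype E] (ends : EdgeEnds T E) (τ : E → ℝ)
    (uD : Fin n → ℝ) (u : T → Fin n → ℝ) (i : Fin n) : ℝ :=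
  ∑ σ : E, τ σ * pEdgeSq p ends (fun L => ∑ j, u L j) (∑ j, uD j) σ *
    (edgeDiff ends (fun L => Real.sqrt (vfun p a b (u L) i))
      (Real.sqrt (vfun p a b uD i)) σ) ^ 2

noncomputable def qIntegrand (p : ℝ → ℝ) (a b s : ℝ) : ℝ := s ^ a / ((1 - s) ^ b * p s ^ 2)

noncomputable def logQP (p : ℝ → ℝ) (a b s : ℝ) : ℝ := Real.log (qfun p a b s / p s)

theorem MonotoneOn.monotoneOn_integral_div {f : ℝ → ℝ} {c : ℝ} (hf : MonotoneOn f (Ico 0 c)) :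
    MonotoneOn (fun x => (∫ s in (0:ℝ)..x, f s) / x) (Ioo 0 c) := by
  intro x hx y hy hxy
  have hfi : ∀ u v, 0 ≤ u → u ≤ v → v < c → IntervalIntegrable f volume u v :=
    fun u v hu huv hv =>
      (hf.mono (by rw [uIcc_of_le huv]; exact Icc_subset_Ico hu hv)).intervalIntegrable
  have hx' : x ∈ Ico 0 c := ⟨hx.1.le, hx.2⟩
  have h_left : ∫ s in (0:ℝ)..x, f s ≤ x * f x := by
    simpa using intervalIntegral.integral_mono_on hx.1.le (hfi 0 x le_rfl hx.1.le hx.2)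
      intervalIntegrable_const fun s hs => hf ⟨hs.1, hs.2.trans_lt hx.2⟩ hx' hs.2
  have h_right : (y - x) * f x ≤ ∫ s in x..y, f s := by
    simpa using intervalIntegral.integral_mono_on hxy intervalIntegrable_const
      (hfi x y hx.1.le hxy hy.2) fun s hs => hf hx' ⟨hx.1.le.trans hs.1, hs.2.trans_lt hy.2⟩ hs.1
  beta_reduce
  rw [← intervalIntegral.integral_add_adjacent_intervals (hfi 0 x le_rfl hx.1.le hx.2)
    (hfi x y hx.1.le hxy hy.2), div_le_div_iff₀ hx.1 hy.1]
  nlinarith [mul_le_mul_of_nonneg_left h_right hx.1.le,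
    mul_le_mul_of_nonneg_right h_left (sub_nonneg.2 hxy)]

theorem MonotoneOn.mul_sub_le_integral {g : ℝ → ℝ} {l r t x : ℝ} (hg : MonotoneOn g (Ioo l r))
    (ht : t ∈ Ioo l r) (hx : x ∈ Icc l r) (hi : IntervalIntegrable g volume t x) :
    g t * (x - t) ≤ ∫ s in t..x, g s := by
  rcases le_total t x with htx | hxt
  · simpa [mul_comm] using intervalIntegral.integral_mono_on_of_le_Ioo htx
      intervalIntegrable_const hi fun s hs => hg ht ⟨ht.1.trans hs.1, hs.2.trans_le hx.2⟩ hs.1.le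
  · have h := intervalIntegral.integral_mono_on_of_le_Ioo hxt hi.symm intervalIntegrable_const
      fun s hs => hg ⟨hx.1.trans_lt hs.1, hs.2.trans ht.2⟩ ht hs.2.le
    rw [intervalIntegral.integral_symm]
    simp only [intervalIntegral.integral_const, smul_eq_mul] at h
    linarith

theorem log_mul_sub_le {x y : ℝ} (hx : 0 ≤ x) (hy : 0 < y) :
    log y * (x - y) ≤ x * (log x - 1) - y * (log y - 1) := by
  rcases hx.eq_or_lt with rfl | hx
  · simp only [log_zero]
    linarith
  · have h := log_le_sub_one_of_pos (div_pos hy hx)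
    rw [log_div hy.ne' hx.ne', le_sub_iff_add_le, ← mul_le_mul_iff_right₀ hx,
      mul_div_cancel₀ y hx.ne'] at h
    linarith

theorem sq_sqrt_sub_sqrt_le {x y : ℝ} (hx : 0 < x) (hy : 0 < y) :
    (√x - √y) ^ 2 ≤ (x - y) * (log x - log y) := by
  wlog hyx : y ≤ x generalizing x y
  · linarith [this hy hx (le_of_not_ge hyx)]
  have hlog : 1 - y / x ≤ log x - log y := by
    have h := log_le_sub_one_of_pos (div_pos hy hx)
    rw [log_div hy.ne' hx.ne'] at h
    linarith
  have hsq : (√x - √y) ^ 2 * x ≤ (x - y) ^ 2 := by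
    -- `(s² - t²)² - (s - t)² s² = (s - t)² (2 s t + t²)`
    have key : ∀ s t : ℝ, 0 ≤ s → 0 ≤ t → (s - t) ^ 2 * s ^ 2 ≤ (s ^ 2 - t ^ 2) ^ 2 :=
      fun s t hs ht => by
        nlinarith [mul_nonneg (sq_nonneg (s - t)) (mul_nonneg hs ht),
          mul_nonneg (sq_nonneg (s - t)) (sq_nonneg t)]
    simpa [sq_sqrt hx.le, sq_sqrt hy.le] using key (√x) (√y) (sqrt_nonneg x) (sqrt_nonneg y)
  calc (√x - √y) ^ 2 ≤ (x - y) * (1 - y / x) := by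
        rw [show (x - y) * (1 - y / x) = (x - y) ^ 2 / x by field_simp, le_div_iff₀ hx]
        exact hsq
    _ ≤ (x - y) * (log x - log y) := mul_le_mul_of_nonneg_left hlog (sub_nonneg.2 hyx)

section Potential

variable {p : ℝ → ℝ} {a b : ℝ}

theorem qIntegrand_pos (hppos : ∀ M ∈ Ico (0:ℝ) 1, 0 < p M) {s : ℝ} (hs : s ∈ Ioo (0:ℝ) 1) :
    0 < qIntegrand p a b s :=
  div_pos (rpow_pos_of_pos hs.1 a)
    (mul_pos (rpow_pos_of_pos (sub_pos.2 hs.2) b) (pow_pos (hppos s ⟨hs.1.le, hs.2⟩) 2))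

theorem qIntegrand_monotoneOn (ha : 0 ≤ a) (hb : 0 ≤ b) (hpa : AntitoneOn p (Icc 0 1))
    (hppos : ∀ M ∈ Ico (0:ℝ) 1, 0 < p M) : MonotoneOn (qIntegrand p a b) (Ico 0 1) := by
  intro x hx y hy hxy
  have hpy := hppos y hy
  have hpxy : p y ^ 2 ≤ p x ^ 2 :=
    pow_le_pow_left₀ hpy.le (hpa (Ico_subset_Icc_self hx) (Ico_subset_Icc_self hy) hxy) 2
  have hxy' : (1 - y) ^ b ≤ (1 - x) ^ b := rpow_le_rpow (by linarith [hy.2]) (by linarith) hb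
  exact div_le_div₀ (rpow_nonneg hy.1 a) (rpow_le_rpow hx.1 hxy ha)
    (mul_pos (rpow_pos_of_pos (sub_pos.2 hy.2) b) (pow_pos hpy 2))
    (mul_le_mul hxy' hpxy (pow_nonneg hpy.le 2) (rpow_nonneg (by linarith [hx.2]) b))

theorem intervalIntegrable_qIntegrand (ha : 0 ≤ a) (hb : 0 ≤ b) (hpa : AntitoneOn p (Icc 0 1))
    (hppos : ∀ M ∈ Ico (0:ℝ) 1, 0 < p M) {M : ℝ} (hM : M ∈ Ico (0:ℝ) 1) :
    IntervalIntegrable (qIntegrand p a b) volume 0 M :=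
  ((qIntegrand_monotoneOn ha hb hpa hppos).mono
    (by rw [uIcc_of_le hM.1]; exact Icc_subset_Ico_right hM.2)).intervalIntegrable

theorem qfun_div_eq {M : ℝ} (hpM : p M ≠ 0) :
    qfun p a b M / p M = (∫ s in (0:ℝ)..M, qIntegrand p a b s) / M := by
  rw [qfun]
  simp only [qIntegrand]
  field_simp

theorem qfun_div_pos (ha : 0 ≤ a) (hb : 0 ≤ b) (hpa : AntitoneOn p (Icc 0 1))
    (hppos : ∀ M ∈ Ico (0:ℝ) 1, 0 < p M) {M : ℝ} (hM : M ∈ Ioo (0:ℝ) 1) :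
    0 < qfun p a b M / p M := by
  rw [qfun_div_eq (hppos M ⟨hM.1.le, hM.2⟩).ne']
  exact div_pos (intervalIntegral.intervalIntegral_pos_of_pos_on
    (intervalIntegrable_qIntegrand ha hb hpa hppos ⟨hM.1.le, hM.2⟩)
    (fun s hs => qIntegrand_pos hppos ⟨hs.1, hs.2.trans hM.2⟩) hM.1) hM.1

theorem logQP_monotoneOn (ha : 0 ≤ a) (hb : 0 ≤ b) (hpa : AntitoneOn p (Icc 0 1))
    (hppos : ∀ M ∈ Ico (0:ℝ) 1, 0 < p M) : MonotoneOn (logQP p a b) (Ioo 0 1) := by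
  intro x hx y hy hxy
  have hqx := qfun_div_pos ha hb hpa hppos hx
  rw [logQP, logQP, qfun_div_eq (hppos y ⟨hy.1.le, hy.2⟩).ne'] at *
  rw [qfun_div_eq (hppos x ⟨hx.1.le, hx.2⟩).ne'] at hqx ⊢
  exact log_le_log hqx ((qIntegrand_monotoneOn ha hb hpa hppos).monotoneOn_integral_div hx hy hxy)

/-- From `qIntegrand t ≥ t ^ a / p 0 ^ 2`. -/
theorem logQP_ge (ha : 0 ≤ a) (hb : 0 ≤ b) (hpa : AntitoneOn p (Icc 0 1))
    (hppos : ∀ M ∈ Ico (0:ℝ) 1, 0 < p M) {s : ℝ} (hs : s ∈ Ioo (0:ℝ) 1) :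
    a * log s - log ((a + 1) * p 0 ^ 2) ≤ logQP p a b s := by
  have hp0 : 0 < p 0 := hppos 0 ⟨le_rfl, one_pos⟩
  have hC : 0 < (a + 1) * p 0 ^ 2 := mul_pos (by linarith) (pow_pos hp0 2)
  have h_int : s ^ (a + 1) / ((a + 1) * p 0 ^ 2) ≤ ∫ t in (0:ℝ)..s, qIntegrand p a b t := by
    have h_eq : ∫ t in (0:ℝ)..s, t ^ a / p 0 ^ 2 = s ^ (a + 1) / ((a + 1) * p 0 ^ 2) := by
      rw [intervalIntegral.integral_div, integral_rpow (Or.inl (by linarith)),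
        zero_rpow (by linarith), div_div]
      ring_nf
    rw [← h_eq]
    refine intervalIntegral.integral_mono_on hs.1.le
      ((intervalIntegral.intervalIntegrable_rpow' (by linarith)).div_const _)
      (intervalIntegrable_qIntegrand ha hb hpa hppos ⟨hs.1.le, hs.2⟩) fun t ht => ?_
    have ht1 : t < 1 := ht.2.trans_lt hs.2
    have hpt : 0 < p t := hppos t ⟨ht.1, ht1⟩
    have hden : (1 - t) ^ b * p t ^ 2 ≤ p 0 ^ 2 := by
      calc (1 - t) ^ b * p t ^ 2 ≤ 1 * p 0 ^ 2 := mul_le_mul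
            (rpow_le_one (by linarith) (by linarith [ht.1]) hb)
            (pow_le_pow_left₀ hpt.le (hpa ⟨le_rfl, zero_le_one⟩ ⟨ht.1, ht1.le⟩ ht.1) 2)
            (by positivity) zero_le_one
        _ = p 0 ^ 2 := one_mul _
    exact div_le_div_of_nonneg_left (rpow_nonneg ht.1 a)
      (mul_pos (rpow_pos_of_pos (sub_pos.2 ht1) b) (pow_pos hpt 2)) hden
  have h_avg : s ^ a / ((a + 1) * p 0 ^ 2) ≤ (∫ t in (0:ℝ)..s, qIntegrand p a b t) / s := by
    rwa [le_div_iff₀ hs.1, div_mul_eq_mul_div, ← rpow_add_one hs.1.ne']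
  have h_log := log_le_log (div_pos (rpow_pos_of_pos hs.1 a) hC) h_avg
  rw [log_div (rpow_pos_of_pos hs.1 a).ne' hC.ne', log_rpow hs.1] at h_log
  rw [logQP, qfun_div_eq (hppos s ⟨hs.1.le, hs.2⟩).ne']
  linarith

/-- `logQP` is bounded above on `(0, c]` by monotonicity and below by `logQP_ge`. -/
theorem logQP_integrableOn (ha : 0 ≤ a) (hb : 0 ≤ b) (hpa : AntitoneOn p (Icc 0 1))
    (hppos : ∀ M ∈ Ico (0:ℝ) 1, 0 < p M) {c : ℝ} (hc : c ∈ Ioo (0:ℝ) 1) :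
    IntegrableOn (logQP p a b) (Ioc 0 c) := by
  have hmono := (logQP_monotoneOn ha hb hpa hppos).mono (Ioc_subset_Ioo_right hc.2)
  have h_log : IntegrableOn log (Ioc 0 c) :=
    (intervalIntegral.intervalIntegrable_log' (a := 0) (b := c)).1
  refine integrable_of_le_of_le
    (g₁ := fun s => a * log s - log ((a + 1) * p 0 ^ 2)) (g₂ := fun _ => logQP p a b c)
    (aemeasurable_restrict_of_monotoneOn measurableSet_Ioc hmono).aestronglyMeasurable ?_ ?_
    ((h_log.const_mul a).sub (integrableOn_const measure_Ioc_lt_top.ne))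
    (integrableOn_const measure_Ioc_lt_top.ne)
  all_goals filter_upwards [ae_restrict_mem measurableSet_Ioc] with s hs
  · exact logQP_ge ha hb hpa hppos ⟨hs.1, hs.2.trans_lt hc.2⟩
  · exact hmono hs ⟨hc.1, le_rfl⟩ hs.2

theorem intervalIntegrable_logQP (ha : 0 ≤ a) (hb : 0 ≤ b) (hpa : AntitoneOn p (Icc 0 1))
    (hppos : ∀ M ∈ Ico (0:ℝ) 1, 0 < p M) {M : ℝ} (hM : M ∈ Ico (0:ℝ) 1) :
    IntervalIntegrable (logQP p a b) volume 0 M := by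
  rcases hM.1.eq_or_lt with rfl | hM0
  · exact IntervalIntegrable.refl
  · exact (intervalIntegrable_iff_integrableOn_Ioc_of_le hM0.le).2
      (logQP_integrableOn ha hb hpa hppos ⟨hM0, hM.2⟩)

end Potential

section CellEntropy

variable {p : ℝ → ℝ} {a b : ℝ} {n : ℕ}

theorem sum_mem_Ioo_of_pos {u : Fin n → ℝ} (hu : ∀ j, 0 < u j) (hu1 : ∑ j, u j < 1) (i : Fin n) :
    ∑ j, u j ∈ Ioo (0:ℝ) 1 :=
  ⟨(hu i).trans_le (Finset.single_le_sum (fun j _ => (hu j).le) (Finset.mem_univ i)), hu1⟩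

theorem vfun_eq {u : Fin n → ℝ} (hM : ∑ j, u j ≠ 0) (i : Fin n) :
    vfun p a b u i = u i * (qfun p a b (∑ j, u j) / p (∑ j, u j)) := by
  rw [vfun, if_neg hM, mul_div_assoc]

theorem vfun_pos (ha : 0 ≤ a) (hb : 0 ≤ b) (hpa : AntitoneOn p (Icc 0 1))
    (hppos : ∀ M ∈ Ico (0:ℝ) 1, 0 < p M) {u : Fin n → ℝ} (hu : ∀ j, 0 < u j)
    (hu1 : ∑ j, u j < 1) (i : Fin n) : 0 < vfun p a b u i := by
  have hM := sum_mem_Ioo_of_pos hu hu1 i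
  rw [vfun_eq hM.1.ne']
  exact mul_pos (hu i) (qfun_div_pos ha hb hpa hppos hM)

theorem log_vfun (ha : 0 ≤ a) (hb : 0 ≤ b) (hpa : AntitoneOn p (Icc 0 1))
    (hppos : ∀ M ∈ Ico (0:ℝ) 1, 0 < p M) {u : Fin n → ℝ} (hu : ∀ j, 0 < u j)
    (hu1 : ∑ j, u j < 1) (i : Fin n) :
    log (vfun p a b u i) = log (u i) + logQP p a b (∑ j, u j) := by
  have hM := sum_mem_Ioo_of_pos hu hu1 i
  rw [vfun_eq hM.1.ne', log_mul (hu i).ne' (qfun_div_pos ha hb hpa hppos hM).ne', logQP]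

theorem hent_sub_le [Nonempty (Fin n)] (ha : 0 ≤ a) (hb : 0 ≤ b)
    (hpa : AntitoneOn p (Icc 0 1)) (hppos : ∀ M ∈ Ico (0:ℝ) 1, 0 < p M)
    {ut u : Fin n → ℝ} (hut : ∀ i, 0 < ut i) (hut1 : ∑ i, ut i < 1)
    (hu : ∀ i, 0 ≤ u i) (hu1 : ∑ i, u i < 1) :
    hent p a b ut - hent p a b u ≤ ∑ i, log (vfun p a b ut i) * (ut i - u i) := by
  have hMu : ∑ i, u i ∈ Ico (0:ℝ) 1 := ⟨Finset.sum_nonneg fun i _ => hu i, hu1⟩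
  have hMt := sum_mem_Ioo_of_pos hut hut1 (Classical.arbitrary _)
  have h_mix : ∑ i, (ut i * (log (ut i) - 1) + 1) - ∑ i, (u i * (log (u i) - 1) + 1) ≤
      ∑ i, log (ut i) * (ut i - u i) := by
    rw [← Finset.sum_sub_distrib]
    exact Finset.sum_le_sum fun i _ => by linarith [log_mul_sub_le (hu i) (hut i)]
  have h_pot : logQP p a b (∑ i, ut i) * (∑ i, u i - ∑ i, ut i) ≤
      ∫ s in (∑ i, ut i)..(∑ i, u i), logQP p a b s :=
    (logQP_monotoneOn ha hb hpa hppos).mul_sub_le_integral hMt (Ico_subset_Icc_self hMu)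
      ((intervalIntegrable_logQP ha hb hpa hppos (Ioo_subset_Ico_self hMt)).symm.trans
        (intervalIntegrable_logQP ha hb hpa hppos hMu))
  rw [← intervalIntegral.integral_interval_sub_left
    (intervalIntegrable_logQP ha hb hpa hppos hMu)
    (intervalIntegrable_logQP ha hb hpa hppos (Ioo_subset_Ico_self hMt))] at h_pot
  have h_grad : ∑ i, log (vfun p a b ut i) * (ut i - u i) =
      ∑ i, log (ut i) * (ut i - u i) + logQP p a b (∑ i, ut i) * (∑ i, ut i - ∑ i, u i) := by
    simp only [log_vfun ha hb hpa hppos hut hut1, add_mul, Finset.sum_add_distrib,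
      ← Finset.mul_sum, Finset.sum_sub_distrib]
  have hent_eq : ∀ w : Fin n → ℝ, hent p a b w =
      ∑ i, (w i * (log (w i) - 1) + 1) + ∫ s in (0:ℝ)..(∑ i, w i), logQP p a b s := fun _ => rfl
  rw [h_grad, hent_eq, hent_eq]
  linarith

theorem hstar_sub_le [Nonempty (Fin n)] (ha : 0 ≤ a) (hb : 0 ≤ b)
    (hpa : AntitoneOn p (Icc 0 1)) (hppos : ∀ M ∈ Ico (0:ℝ) 1, 0 < p M)
    {uD : Fin n → ℝ} (huD : ∀ i, 0 < uD i) (hMD : ∑ i, uD i < 1)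
    {ut u : Fin n → ℝ} (hut : ∀ i, 0 < ut i) (hut1 : ∑ i, ut i < 1)
    (hu : ∀ i, 0 ≤ u i) (hu1 : ∑ i, u i < 1) :
    hstar p a b uD ut - hstar p a b uD u ≤
      ∑ i, (log (vfun p a b ut i) - log (vfun p a b uD i)) * (ut i - u i) := by
  have hvD : ∀ i, vfun p a b uD i = uD i * qfun p a b (∑ j, uD j) / p (∑ j, uD j) :=
    fun i => if_neg (sum_mem_Ioo_of_pos huD hMD (Classical.arbitrary _)).1.ne'
  have h := hent_sub_le ha hb hpa hppos hut hut1 hu hu1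
  simp only [hstar, hvD, mul_sub, sub_mul, Finset.sum_sub_distrib] at h ⊢
  linarith

theorem Hent_sub_le [Nonempty (Fin n)] {T : Type} [Fintype T]
    (ha : 0 ≤ a) (hb : 0 ≤ b) (hpa : AntitoneOn p (Icc 0 1))
    (hppos : ∀ M ∈ Ico (0:ℝ) 1, 0 < p M) {m : T → ℝ} (hm : ∀ K, 0 ≤ m K)
    {uD : Fin n → ℝ} (huD : ∀ i, 0 < uD i) (hMD : ∑ i, uD i < 1)
    {ut u : T → Fin n → ℝ} (hut : ∀ K i, 0 < ut K i) (hut1 : ∀ K, ∑ i, ut K i < 1)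
    (hu : ∀ K i, 0 ≤ u K i) (hu1 : ∀ K, ∑ i, u K i < 1) :
    Hent p a b m uD ut - Hent p a b m uD u ≤ ∑ i, ∑ K,
      m K * (ut K i - u K i) * (log (vfun p a b (ut K) i) - log (vfun p a b uD i)) := by
  rw [Finset.sum_comm, Hent, Hent, ← Finset.sum_sub_distrib]
  refine Finset.sum_le_sum fun K _ => ?_
  calc m K * hstar p a b uD (ut K) - m K * hstar p a b uD (u K)
      ≤ m K * ∑ i, (log (vfun p a b (ut K) i) - log (vfun p a b uD i)) * (ut K i - u K i) := by
        rw [← mul_sub]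
        exact mul_le_mul_of_nonneg_left
          (hstar_sub_le ha hb hpa hppos huD hMD (hut K) (hut1 K) (hu K) (hu1 K)) (hm K)
    _ = _ := by
        rw [Finset.mul_sum]
        exact Finset.sum_congr rfl fun i _ => by ring

end CellEntropy

theorem pEdgeSq_nonneg {T E : Type} (ends : EdgeEnds T E) (p : ℝ → ℝ) (Mf : T → ℝ) (MD : ℝ)
    (σ : E) :
    0 ≤ pEdgeSq p ends Mf MD σ := by
  unfold pEdgeSq
  split <;> positivity

theorem edgeDiff_sub_const {T E : Type} (ends : EdgeEnds T E) (w : T → ℝ) (C : ℝ) (σ : E) :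
    edgeDiff ends (fun K => w K - C) 0 σ = edgeDiff ends w C σ := by
  unfold edgeDiff
  split <;> ring

theorem sum_flux_mul_eq_neg_sum_edgeDiff_mul {T E : Type} [Fintype T] [Fintype E]
    [DecidableEq T] (ends : EdgeEnds T E) (hends : ∀ σ K L, ends σ = Sum.inr (K, L) → K ≠ L)
    (c : E → ℝ) (w : T → ℝ) (wD : ℝ) (z : T → ℝ) :
    ∑ K, (∑ σ, c σ * cellDiff ends w wD σ K) * z K =
      -∑ σ, c σ * edgeDiff ends w wD σ * edgeDiff ends z 0 σ := by
  simp only [Finset.sum_mul, ← Finset.sum_neg_distrib]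
  rw [Finset.sum_comm]
  refine Finset.sum_congr rfl fun σ _ => ?_
  rcases h : ends σ with K | ⟨K, L⟩
  · simp [cellDiff, edgeDiff, h]
  · have hKL := hends σ K L h
    rw [Fintype.sum_eq_add K L hKL fun J hJ => by simp [cellDiff, h, Ne.symm hJ.1, Ne.symm hJ.2]]
    simp only [cellDiff, edgeDiff, h, hKL, ↓reduceIte]
    ring

theorem sq_edgeDiff_sqrt_le {T E : Type} (ends : EdgeEnds T E) {w : T → ℝ} {wD : ℝ}
    (hw : ∀ K, 0 < w K) (hwD : 0 < wD) (σ : E) :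
    edgeDiff ends (fun K => √(w K)) (√wD) σ ^ 2 ≤
      edgeDiff ends w wD σ * edgeDiff ends (fun K => log (w K)) (log wD) σ := by
  unfold edgeDiff
  split
  · exact sq_sqrt_sub_sqrt_le hwD (hw _)
  · exact sq_sqrt_sub_sqrt_le (hw _) (hw _)

theorem sum_mul_sq_edgeDiff_sqrt_le {T E : Type} [Fintype T] [Fintype E] [DecidableEq T]
    (ends : EdgeEnds T E) (hends : ∀ σ K L, ends σ = Sum.inr (K, L) → K ≠ L)
    {c : E → ℝ} (hc : ∀ σ, 0 ≤ c σ) {w : T → ℝ} {wD : ℝ} (hw : ∀ K, 0 < w K) (hwD : 0 < wD) :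
    ∑ σ, c σ * edgeDiff ends (fun K => √(w K)) (√wD) σ ^ 2 ≤
      -∑ K, (∑ σ, c σ * cellDiff ends w wD σ K) * (log (w K) - log wD) := by
  rw [sum_flux_mul_eq_neg_sum_edgeDiff_mul ends hends c w wD fun K => log (w K) - log wD, neg_neg]
  refine Finset.sum_le_sum fun σ _ => ?_
  rw [mul_assoc, edgeDiff_sub_const]
  exact mul_le_mul_of_nonneg_left (sq_edgeDiff_sqrt_le ends hw hwD σ) (hc σ)

theorem scheme_entropy_dissipation_general (n : ℕ) (hn : 1 ≤ n) (a b : ℝ)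
    (ha : 1 ≤ a) (hb : 1 ≤ b)
    (p : ℝ → ℝ)
    (hpa : AntitoneOn p (Icc 0 1))
    (hppos : ∀ M ∈ Ico (0:ℝ) 1, 0 < p M)
    (T E : Type) [Fintype T] [Fintype E] [DecidableEq T]
    (ends : EdgeEnds T E)
    (hends : ∀ σ K L, ends σ = Sum.inr (K, L) → K ≠ L)
    (m : T → ℝ) (hm : ∀ K, 0 < m K) (τ : E → ℝ) (hτ : ∀ σ, 0 < τ σ)
    (uD : Fin n → ℝ) (huD : ∀ i, 0 < uD i) (hMD : ∑ i, uD i < 1)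
    (Δt : ℝ) (hΔt : 0 < Δt)
    (uprev : T → Fin n → ℝ) (huprev : ∀ K i, 0 ≤ uprev K i)
    (huprev1 : ∀ K, ∑ i, uprev K i < 1)
    (ucur : T → Fin n → ℝ) (hucur_pos : ∀ K i, 0 < ucur K i)
    (hstep : SchemeStep p a b n ends m τ uD Δt uprev ucur) :
    Hent p a b m uD ucur + Δt * ∑ i, Iprod p a b ends τ uD ucur i ≤
      Hent p a b m uD uprev := by
  obtain ⟨-, hucur1, hscheme⟩ := hstep
  have : Nonempty (Fin n) := Fin.pos_iff_nonempty.mp hn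
  have ha0 : 0 ≤ a := by linarith
  have hb0 : 0 ≤ b := by linarith
  set c : E → ℝ := fun σ => τ σ * pEdgeSq p ends (fun L => ∑ j, ucur L j) (∑ j, uD j) σ
  have h_flux : ∀ K i, m K * (ucur K i - uprev K i) =
      Δt * ∑ σ, c σ * cellDiff ends (fun L => vfun p a b (ucur L) i) (vfun p a b uD i) σ K :=
    fun K i => by rw [(div_eq_iff hΔt.ne').mp (hscheme K i), mul_comm]
  have h_prod : ∀ i, Iprod p a b ends τ uD ucur i ≤ -∑ K,
      (∑ σ, c σ * cellDiff ends (fun L => vfun p a b (ucur L) i) (vfun p a b uD i) σ K) *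
        (log (vfun p a b (ucur K) i) - log (vfun p a b uD i)) :=
    fun i => sum_mul_sq_edgeDiff_sqrt_le ends hends
      (fun σ => mul_nonneg (hτ σ).le (pEdgeSq_nonneg ends _ _ _ σ))
      (fun K => vfun_pos ha0 hb0 hpa hppos (hucur_pos K) (hucur1 K) i)
      (vfun_pos ha0 hb0 hpa hppos huD hMD i)
  have h_ent := Hent_sub_le ha0 hb0 hpa hppos (fun K => (hm K).le) huD hMD hucur_pos hucur1
    huprev huprev1
  simp only [h_flux, mul_assoc, ← Finset.mul_sum] at h_ent
  have h_prod_sum := mul_le_mul_of_nonneg_left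
    (Finset.sum_le_sum (s := Finset.univ) fun i _ => h_prod i) hΔt.le
  simp only [Finset.sum_neg_distrib, mul_neg] at h_prod_sum
  linarith

/-- Discrete entropy dissipation inequality: if `u^{k−1}` has nonnegative entries
with total mass `< 1` on every cell and `u^k : 𝒯 → 𝒪` solves one step of the
scheme, then `H(u^k) + Δt Σᵢ Iᵢ(u^k) ≤ H(u^{k−1})`. -/
theorem scheme_entropy_dissipation (n : ℕ) (hn : 1 ≤ n) (a b : ℝ)
    (ha : 1 ≤ a) (hb : 1 ≤ b)
    (p : ℝ → ℝ) (hpc : ContinuousOn p (Icc 0 1))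
    (hpa : AntitoneOn p (Icc 0 1)) (hp1 : p 1 = 0)
    (hppos : ∀ M ∈ Ico (0:ℝ) 1, 0 < p M)
    (T E : Type) [Fintype T] [Fintype E] [DecidableEq T]
    (ends : EdgeEnds T E)
    (hends : ∀ σ K L, ends σ = Sum.inr (K, L) → K ≠ L)
    (m : T → ℝ) (hm : ∀ K, 0 < m K) (τ : E → ℝ) (hτ : ∀ σ, 0 < τ σ)
    (uD : Fin n → ℝ) (huD : ∀ i, 0 < uD i) (hMD : ∑ i, uD i < 1)
    (Δt : ℝ) (hΔt : 0 < Δt)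
    (uprev : T → Fin n → ℝ) (huprev : ∀ K i, 0 ≤ uprev K i)
    (huprev1 : ∀ K, ∑ i, uprev K i < 1)
    (ucur : T → Fin n → ℝ) (hucur_pos : ∀ K i, 0 < ucur K i)
    (hstep : SchemeStep p a b n ends m τ uD Δt uprev ucur) :
    Hent p a b m uD ucur + Δt * ∑ i, Iprod p a b ends τ uD ucur i ≤
      Hent p a b m uD uprev :=
  scheme_entropy_dissipation_general n hn a b ha hb p hpa hppos T E ends hends m hm τ hτ uD huD hMD
    Δt hΔt uprev huprev huprev1 ucur hucur_pos hstep
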